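/- arXiv:1809.10072 — 2 statements merged into one kernel-verified Lean document; each statement's English description precedes it below -/
import Mathlib

section
/- For every integer m, the polynomial f_m(x) = x^6 - 2m x^5 - (5m+15) x^4 - 20 x^3 + 5m x^2 + (2m+6) x + 1 satisfies the congruence f_m(x) ≡ (x - m/3)^6 modulo (m^2+3m+9) in the sense that 3^6 · f_m(x) ≡ (3x - m)^6 modulo (m^2+3m+9) in (ℤ/(m^2+3m+9)ℤ)[x]. -/
open Polynomial

/-- `3^6 · f_m(x) ≡ (3x - m)^6 (mod m^2+3m+9)` in `ℤ[x]`. -/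
theorem simplest_sextic_congruence (m : ℤ) :
    (C (m ^ 2 + 3 * m + 9) : ℤ[X]) ∣
      ((3 * X - C m) ^ 6
        - 3 ^ 6 * (X ^ 6 - C (2 * m) * X ^ 5 - C (5 * m + 15) * X ^ 4
            - 20 * X ^ 3 + C (5 * m) * X ^ 2 + C (2 * m + 6) * X + 1)) := by
  refine ⟨C (m ^ 4 - 3 * m ^ 3 + 27 * m - 81)
      + C (-18 * m ^ 3 + 54 * m ^ 2 - 486) * X
      + C (135 * m ^ 2 - 405 * m) * X ^ 2
      + C (-540 * m + 1620) * X ^ 3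
      + C 1215 * X ^ 4, ?_⟩
  simp only [C_add, C_mul, C_pow, C_neg, C_sub, map_ofNat, C_1]
   
  ring
end

section
/- Let α be a root of f_m(x) = x^6 - 2m x^5 - (5m+15) x^4 - 20 x^3 + 5m x^2 + (2m+6) x + 1 in a field K of characteristic 0 with α ≠ -2. Then β = (α-1)/(α+2) is also a root of f_m. -/
/-- If `α` is a root of `f_m` in a field `K` of characteristic 0 with `α ≠ -2`,
then `(α-1)/(α+2)` is also a root of `f_m`. -/
theorem simplest_sextic_root_transform (m : ℤ) (K : Type*) [Field K] [CharZero K]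
    (α : K) (hα2 : α + 2 ≠ 0)
    (hroot : α ^ 6 - 2 * (m : K) * α ^ 5 - (5 * (m : K) + 15) * α ^ 4
        - 20 * α ^ 3 + 5 * (m : K) * α ^ 2 + (2 * (m : K) + 6) * α + 1 = 0) :
    ((α - 1) / (α + 2)) ^ 6 - 2 * (m : K) * ((α - 1) / (α + 2)) ^ 5
      - (5 * (m : K) + 15) * ((α - 1) / (α + 2)) ^ 4
      - 20 * ((α - 1) / (α + 2)) ^ 3 + 5 * (m : K) * ((α - 1) / (α + 2)) ^ 2
      + (2 * (m : K) + 6) * ((α - 1) / (α + 2)) + 1 = 0 := by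
  have h6 : (α + 2) ^ 6 ≠ 0 := pow_ne_zero _ hα2
  set b := (α - 1) / (α + 2) with hbdef
  have hb : b * (α + 2) = α - 1 := div_mul_cancel₀ _ hα2
  have key : (b ^ 6 - 2 * (m : K) * b ^ 5 - (5 * (m : K) + 15) * b ^ 4
      - 20 * b ^ 3 + 5 * (m : K) * b ^ 2 + (2 * (m : K) + 6) * b + 1) * (α + 2) ^ 6
      = -27 * (α ^ 6 - 2 * (m : K) * α ^ 5 - (5 * (m : K) + 15) * α ^ 4
        - 20 * α ^ 3 + 5 * (m : K) * α ^ 2 + (2 * (m : K) + 6) * α + 1) := by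
    linear_combination (((b*(α+2))^5 + (b*(α+2))^4*(α-1) + (b*(α+2))^3*(α-1)^2
        + (b*(α+2))^2*(α-1)^3 + (b*(α+2))*(α-1)^4 + (α-1)^5)
      - 2*(m:K)*(α+2)*((b*(α+2))^4 + (b*(α+2))^3*(α-1) + (b*(α+2))^2*(α-1)^2
        + (b*(α+2))*(α-1)^3 + (α-1)^4)
      - (5*(m:K)+15)*(α+2)^2*((b*(α+2))^3 + (b*(α+2))^2*(α-1)
        + (b*(α+2))*(α-1)^2 + (α-1)^3)
      - 20*(α+2)^3*((b*(α+2))^2 + (b*(α+2))*(α-1) + (α-1)^2)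
      + 5*(m:K)*(α+2)^4*((b*(α+2)) + (α-1))
      + (2*(m:K)+6)*(α+2)^5) * hb
  rw [hroot, mul_zero] at key
  exact (mul_eq_zero.mp key).resolve_right h6
end
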